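/- Let A : H1 → H2 be nonzero bounded linear with closed range, V : H2 → H2 ρ-SQNE with R(A) ∩ Fix V ≠ ∅ nonempty and closed convex, and 1 ≤ σ ≤ τ. Then for all x ∈ H1: (1/‖A‖) d(Ax, R(A) ∩ Fix V) ≤ d(x, Fix L_σ{V}) ≤ (1/|A|) d(Ax, R(A) ∩ Fix V). -/

import Mathlib

open scoped Classical

/-- `U` is `ρ`-strongly quasi-nonexpansive. -/
def IsSQNE {H : Type*} [NormedAddCommGroup H] [InnerProductSpace ℝ H]
    (U : H → H) (ρ : ℝ) : Prop :=
  ∀ x : H, ∀ z ∈ Function.fixedPoints U, ‖U x - z‖ ^ 2 ≤ ‖x - z‖ ^ 2 - ρ * ‖U x - x‖ ^ 2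

variable {H1 H2 : Type*} [NormedAddCommGroup H1] [InnerProductSpace ℝ H1]
  [NormedAddCommGroup H2] [InnerProductSpace ℝ H2] [CompleteSpace H1] [CompleteSpace H2]

/-- The extrapolated Landweber operator corresponding to `V` and the
extrapolation functional `σ`. -/
noncomputable def Landweber (A : H1 →L[ℝ] H2) (σ : H1 → ℝ) (V : H2 → H2) : H1 → H1 :=
  fun x => x + (σ x / ‖A‖ ^ 2) • (ContinuousLinearMap.adjoint A) (V (A x) - A x)

/-- The maximal extrapolation functional `τ`. -/
noncomputable def tauFun (A : H1 →L[ℝ] H2) (V : H2 → H2) : H1 → ℝ :=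
  fun x =>
    if V (A x) ≠ A x then
      (‖A‖ * ‖V (A x) - A x‖ / ‖(ContinuousLinearMap.adjoint A) (V (A x) - A x)‖) ^ 2
    else 1

/-- `|A|`: the infimum of `‖A x‖` over unit vectors in `(ker A)ᗮ`. -/
noncomputable def minNorm (A : H1 →L[ℝ] H2) : ℝ :=
  sInf ((fun x => ‖A x‖) '' {x : H1 | x ∈ (LinearMap.ker (A : H1 →ₗ[ℝ] H2))ᗮ ∧ ‖x‖ = 1})

/-!
Because `σ > 0` and `V` has a fixed point `A w` in `R(A)`, the fixed points of `L_σ{V}` are exactly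
`A⁻¹(Fix V)`: if `A*(V(Ax) - Ax) = 0`, then `V(Ax) - Ax ⊥ Ax - Aw`, and Pythagoras against the SQNE
inequality forces `V(Ax) = Ax`. The lower bound is then the Lipschitz estimate
`‖Ax - Ay‖ ≤ ‖A‖ ‖x - y‖`. For the upper bound, every `z ∈ R(A) ∩ Fix V` equals `A(x + u)` with
`u ∈ (ker A)ᗮ`, and `|A| ‖u‖ ≤ ‖Au‖ = ‖z - Ax‖`. Finally `|A| > 0` by the open mapping theorem for
`A` onto its closed range, since elements of `(ker A)ᗮ` are minimal-norm preimages.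
-/

open Function Metric Set
open scoped InnerProductSpace

theorem ContinuousLinearMap.exists_preimage_norm_le_of_isClosed_range {𝕜 X Y : Type*}
    [NontriviallyNormedField 𝕜] [NormedAddCommGroup X] [NormedSpace 𝕜 X] [CompleteSpace X]
    [NormedAddCommGroup Y] [NormedSpace 𝕜 Y] [CompleteSpace Y]
    (A : X →L[𝕜] Y) (hR : IsClosed (range A)) :
    ∃ C > 0, ∀ y ∈ range A, ∃ x, A x = y ∧ ‖x‖ ≤ C * ‖y‖ := by
  have hR' : IsClosed (LinearMap.range (A : X →ₗ[𝕜] Y) : Set Y) := by rwa [LinearMap.coe_range]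
  have : CompleteSpace (LinearMap.range (A : X →ₗ[𝕜] Y)) := hR'.completeSpace_coe
  obtain ⟨C, hC, hpre⟩ :=
    (A.codRestrict (LinearMap.range (A : X →ₗ[𝕜] Y)) (LinearMap.mem_range_self _)).exists_preimage_norm_le
      fun ⟨_, x, hx⟩ => ⟨x, Subtype.ext hx⟩
  refine ⟨C, hC, fun y hy => ?_⟩
  obtain ⟨x, hx, hnorm⟩ := hpre ⟨y, hy⟩
  exact ⟨x, congrArg Subtype.val hx, hnorm⟩

section

variable {E F : Type*} [NormedAddCommGroup E] [InnerProductSpace ℝ E]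
  [NormedAddCommGroup F] [InnerProductSpace ℝ F]

theorem IsSQNE.eq_of_inner_eq_zero {U : E → E} {ρ : ℝ} (hU : IsSQNE U ρ) (hρ : 0 ≤ ρ)
    {x z : E} (hz : z ∈ fixedPoints U) (h : ⟪U x - x, x - z⟫_ℝ = 0) : U x = x := by
  have hpyth : ‖U x - z‖ ^ 2 = ‖U x - x‖ ^ 2 + ‖x - z‖ ^ 2 := by
    rw [← sub_add_sub_cancel (U x) x z, sq, sq, sq, norm_add_sq_eq_norm_sq_add_norm_sq_real h]
  have hsq := hU x z hz
  have : ‖U x - x‖ = 0 := by nlinarith [norm_nonneg (U x - x)]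
  exact sub_eq_zero.mp (norm_eq_zero.mp this)

theorem ContinuousLinearMap.infDist_apply_le_opNorm_mul_infDist_preimage {X Y : Type*}
    [SeminormedAddCommGroup X] [NormedSpace ℝ X] [SeminormedAddCommGroup Y] [NormedSpace ℝ Y]
    (A : X →L[ℝ] Y) {T : Set Y} (hT : (A ⁻¹' T).Nonempty) (x : X) :
    infDist (A x) T ≤ ‖A‖ * infDist x (A ⁻¹' T) := by
  have := hT.to_subtype
  rw [infDist_eq_iInf (s := A ⁻¹' T), Real.mul_iInf_of_nonneg (norm_nonneg A)]
  refine le_ciInf fun ⟨y, hy⟩ => (infDist_le_dist_of_mem (x := A x) hy).trans ?_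
  rw [dist_eq_norm, dist_eq_norm, ← map_sub]
  exact A.le_opNorm _

theorem minNorm_nonneg (A : E →L[ℝ] F) : 0 ≤ minNorm A :=
  Real.sInf_nonneg (by rintro _ ⟨x, -, rfl⟩; exact norm_nonneg _)

theorem minNorm_mul_norm_le (A : E →L[ℝ] F) {u : E}
    (hu : u ∈ (LinearMap.ker (A : E →ₗ[ℝ] F))ᗮ) : minNorm A * ‖u‖ ≤ ‖A u‖ := by
  rcases eq_or_ne u 0 with rfl | hu0
  · simp
  have hnu : 0 < ‖u‖ := norm_pos_iff.mpr hu0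
  have hunit : ‖‖u‖⁻¹ • u‖ = 1 := by rw [norm_smul, norm_inv, norm_norm, inv_mul_cancel₀ hnu.ne']
  have hle : minNorm A ≤ ‖u‖⁻¹ * ‖A u‖ := by
    refine csInf_le ⟨0, ?_⟩ ⟨_, ⟨Submodule.smul_mem _ _ hu, hunit⟩, ?_⟩
    · rintro _ ⟨x, -, rfl⟩
      exact norm_nonneg _
    · simp only [map_smul, norm_smul, norm_inv, norm_norm]
  calc minNorm A * ‖u‖ ≤ ‖u‖⁻¹ * ‖A u‖ * ‖u‖ := by gcongr
    _ = ‖A u‖ := by field_simp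

theorem norm_le_of_mem_orthogonal_ker (A : E →L[ℝ] F) {u x : E}
    (hu : u ∈ (LinearMap.ker (A : E →ₗ[ℝ] F))ᗮ) (hx : A x = A u) : ‖u‖ ≤ ‖x‖ := by
  have hk : x - u ∈ LinearMap.ker (A : E →ₗ[ℝ] F) := by simp [hx]
  have hpyth := norm_add_sq_eq_norm_sq_add_norm_sq_real
    (Submodule.inner_left_of_mem_orthogonal hk hu)
  rw [add_sub_cancel] at hpyth
  exact (mul_self_le_mul_self_iff (norm_nonneg _) (norm_nonneg _)).mpr
    (hpyth ▸ le_add_of_nonneg_right (mul_self_nonneg _))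

variable [CompleteSpace E]

theorem exists_mem_orthogonal_ker_apply_eq (A : E →L[ℝ] F) (w : E) :
    ∃ u ∈ (LinearMap.ker (A : E →ₗ[ℝ] F))ᗮ, A u = A w := by
  have : CompleteSpace (LinearMap.ker (A : E →ₗ[ℝ] F)) := A.isClosed_ker.completeSpace_coe
  obtain ⟨k, hk, u, hu, rfl⟩ := (LinearMap.ker (A : E →ₗ[ℝ] F)).exists_add_mem_mem_orthogonal w
  have hAk : A k = 0 := hk
  exact ⟨u, hu, by rw [map_add, hAk, zero_add]⟩

theorem minNorm_mul_infDist_preimage_le (A : E →L[ℝ] F) {T : Set F} (hT : T ⊆ range A)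
    (hTne : T.Nonempty) (x : E) : minNorm A * infDist x (A ⁻¹' T) ≤ infDist (A x) T := by
  refine (le_infDist hTne).mpr fun z hz => ?_
  obtain ⟨w, rfl⟩ := hT hz
  obtain ⟨u, hu, hAu⟩ := exists_mem_orthogonal_ker_apply_eq A (w - x)
  have hmem : x + u ∈ A ⁻¹' T := by simpa [hAu] using hz
  calc minNorm A * infDist x (A ⁻¹' T) ≤ minNorm A * ‖u‖ := by
        gcongr
        · exact minNorm_nonneg A
        · simpa using infDist_le_dist_of_mem (x := x) hmem
    _ ≤ ‖A u‖ := minNorm_mul_norm_le A hu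
    _ = dist (A x) (A w) := by rw [hAu, map_sub, dist_comm, dist_eq_norm]

theorem minNorm_pos [CompleteSpace F] {A : E →L[ℝ] F} (hA : A ≠ 0) (hR : IsClosed (range A)) :
    0 < minNorm A := by
  obtain ⟨C, hC, hpre⟩ := A.exists_preimage_norm_le_of_isClosed_range hR
  obtain ⟨w, hw⟩ : ∃ w, A w ≠ 0 := by
    by_contra! h
    exact hA (ContinuousLinearMap.ext h)
  obtain ⟨u, hu, hAu⟩ := exists_mem_orthogonal_ker_apply_eq A w
  have hu0 : u ≠ 0 := by
    rintro rfl
    exact hw (by rw [← hAu, map_zero])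
  have hbound : ∀ v ∈ (LinearMap.ker (A : E →ₗ[ℝ] F))ᗮ, ‖v‖ ≤ C * ‖A v‖ := by
    intro v hv
    obtain ⟨x, hx, hxC⟩ := hpre (A v) ⟨v, rfl⟩
    exact (norm_le_of_mem_orthogonal_ker A hv hx).trans hxC
  suffices C⁻¹ ≤ minNorm A from (inv_pos.mpr hC).trans_le this
  refine le_csInf ⟨_, _, ⟨Submodule.smul_mem _ ‖u‖⁻¹ hu, norm_smul_inv_norm hu0⟩, rfl⟩ ?_
  rintro _ ⟨v, ⟨hv, hv1⟩, rfl⟩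
  rw [inv_le_iff_one_le_mul₀ hC, ← hv1, mul_comm]
  exact hbound v hv

variable [CompleteSpace F]

theorem fixedPoints_landweber {A : E →L[ℝ] F} (hA : A ≠ 0) {σ : E → ℝ} (hσ : ∀ x, σ x ≠ 0)
    {V : F → F} {ρ : ℝ} (hV : IsSQNE V ρ) (hρ : 0 ≤ ρ)
    (hfix : (range A ∩ fixedPoints V).Nonempty) :
    fixedPoints (Landweber A σ V) = A ⁻¹' fixedPoints V := by
  obtain ⟨_, ⟨w, rfl⟩, hw⟩ := hfix
  ext x
  have hcoef : σ x / ‖A‖ ^ 2 ≠ 0 := div_ne_zero (hσ x) (pow_ne_zero _ (norm_ne_zero_iff.mpr hA))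
  simp only [mem_preimage, mem_fixedPoints, IsFixedPt, Landweber, add_eq_left, smul_eq_zero, hcoef,
    false_or]
  constructor
  · intro hadj
    refine hV.eq_of_inner_eq_zero hρ hw ?_
    rw [← map_sub, ← ContinuousLinearMap.adjoint_inner_left, hadj, inner_zero_left]
  · intro hx
    rw [hx, sub_self, map_zero]

end

theorem stmt16_general (A : H1 →L[ℝ] H2) (hA : A ≠ 0) (hR : IsClosed (Set.range A))
    (V : H2 → H2) (ρ : ℝ) (hρ : 0 ≤ ρ) (hV : IsSQNE V ρ)
    (hfix : (Set.range A ∩ Function.fixedPoints V).Nonempty)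
    (σ : H1 → ℝ) (hσ : ∀ x, 1 ≤ σ x ∧ σ x ≤ tauFun A V x) :
    ∀ x : H1,
      (1 / ‖A‖) * Metric.infDist (A x) (Set.range A ∩ Function.fixedPoints V) ≤
        Metric.infDist x (Function.fixedPoints (Landweber A σ V)) ∧
      Metric.infDist x (Function.fixedPoints (Landweber A σ V)) ≤
        (1 / minNorm A) * Metric.infDist (A x) (Set.range A ∩ Function.fixedPoints V) := by
  intro x
  have hfixL : fixedPoints (Landweber A σ V) = A ⁻¹' (range A ∩ fixedPoints V) := by
    rw [preimage_range_inter]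
    exact fixedPoints_landweber hA (fun x => (one_pos.trans_le (hσ x).1).ne') hV hρ hfix
  rw [hfixL, one_div, one_div, inv_mul_le_iff₀ (norm_pos_iff.mpr hA),
    le_inv_mul_iff₀ (minNorm_pos hA hR)]
  exact ⟨A.infDist_apply_le_opNorm_mul_infDist_preimage (hfix.preimage' inter_subset_left) x,
    minNorm_mul_infDist_preimage_le A inter_subset_left hfix x⟩

theorem stmt16 (A : H1 →L[ℝ] H2) (hA : A ≠ 0) (hR : IsClosed (Set.range A))
    (V : H2 → H2) (ρ : ℝ) (hρ : 0 ≤ ρ) (hV : IsSQNE V ρ)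
    (hfix : (Set.range A ∩ Function.fixedPoints V).Nonempty)
    (hcl : IsClosed (Set.range A ∩ Function.fixedPoints V))
    (hcv : Convex ℝ (Set.range A ∩ Function.fixedPoints V))
    (σ : H1 → ℝ) (hσ : ∀ x, 1 ≤ σ x ∧ σ x ≤ tauFun A V x) :
    ∀ x : H1,
      (1 / ‖A‖) * Metric.infDist (A x) (Set.range A ∩ Function.fixedPoints V) ≤
        Metric.infDist x (Function.fixedPoints (Landweber A σ V)) ∧
      Metric.infDist x (Function.fixedPoints (Landweber A σ V)) ≤
        (1 / minNorm A) * Metric.infDist (A x) (Set.range A ∩ Function.fixedPoints V) :=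
  stmt16_general A hA hR V ρ hρ hV hfix σ hσ
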